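/- arXiv:cs/0606082 — 2 statements merged into one kernel-verified Lean document; each statement's English description precedes it below -/
import Mathlib

section
/- In the Hamming Hamster-Wheel setting with r ∈ [1, m−1], the r-modification D' of the Hamming Hamster-Wheel pseudo-distance is liberally triangle-inequality respecting: for all v, w, x ∈ 𝒱, if d'(v,x), d'(v,w), d'(w,x) are all real, then d'(v,x) ≤ d'(v,w) + d'(w,x); and if d'(v,x) = ∞, then d'(v,w) = ∞ or d'(w,x) = ∞. -/
/-- `lt` is a strict total order on `C`. -/
def StrictTotalOrder' {C : Type*} (lt : C → C → Prop) : Prop :=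
  (∀ c, ¬ lt c c) ∧ (∀ a b c, lt a b → lt b c → lt a c) ∧
  (∀ a b, a ≠ b → lt a b ∨ lt b a)

/-- The operator induced by a pseudo-distance `⟨C, lt, d⟩`. -/
def inducedOp {𝒱 C : Type*} (lt : C → C → Prop) (d : 𝒱 → 𝒱 → C)
    (A B : Set 𝒱) : Set 𝒱 :=
  {w ∈ B | ∃ v ∈ A, ∀ v' ∈ A, ∀ w' ∈ B, lt (d v w) (d v' w') ∨ d v w = d v' w'}

/-- The set of atoms on which two valuations differ. -/
def hamSet {𝒜 T : Type*} (v w : 𝒜 → T) : Set 𝒜 := {p | v p ≠ w p}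

open Classical in
/-- The valuation assigning `t1` to the atom `a0` and `t0` to every other atom. -/
noncomputable def unitVal {𝒜 T : Type*} (t0 t1 : T) (a0 : 𝒜) : 𝒜 → T :=
  fun a => if a = a0 then t1 else t0

/-- The atoms `p 1, …, p m, q 1, …, q m` are `2m` pairwise distinct atoms. -/
def hamDistinctAtoms {𝒜 : Type*} (m : ℕ) (p q : ℕ → 𝒜) : Prop :=
  (∀ i ∈ Set.Icc 1 m, ∀ j ∈ Set.Icc 1 m, p i ≠ q j) ∧
  (∀ i ∈ Set.Icc 1 m, ∀ j ∈ Set.Icc 1 m, p i = p j → i = j) ∧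
  (∀ i ∈ Set.Icc 1 m, ∀ j ∈ Set.Icc 1 m, q i = q j → i = j)

/-- `X = {v 1, …, v m, w 1, …, w m}`, where `v i = unitVal t0 t1 (p i)` and
`w i = unitVal t0 t1 (q i)`. -/
noncomputable def hamX {𝒜 T : Type*} (m : ℕ) (p q : ℕ → 𝒜) (t0 t1 : T) : Set (𝒜 → T) :=
  {x | ∃ i ∈ Set.Icc 1 m, x = unitVal t0 t1 (p i) ∨ x = unitVal t0 t1 (q i)}

open Classical in
/-- The Hamming Hamster-Wheel pseudo-distance, with costs in `ℝ ∪ {∞}` (`WithTop ℝ`). -/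
noncomputable def hamD {𝒜 T : Type*} (m : ℕ) (p q : ℕ → 𝒜) (t0 t1 : T)
    (a b : 𝒜 → T) : WithTop ℝ :=
  if a = b then 0
  else if ({a, b} : Set (𝒜 → T)) ⊆ hamX m p q t0 t1 then
    (if (∃ i ∈ Set.Icc 1 m, ∃ j ∈ Set.Icc 1 m,
          a = unitVal t0 t1 (p i) ∧ b = unitVal t0 t1 (p j)) ∨
        (∃ i ∈ Set.Icc 1 m, ∃ j ∈ Set.Icc 1 m,
          a = unitVal t0 t1 (q i) ∧ b = unitVal t0 t1 (q j)) then ((2.1 : ℝ) : WithTop ℝ)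
     else if ∃ i ∈ Set.Icc 1 m,
          ({a, b} : Set (𝒜 → T)) = {unitVal t0 t1 (p i), unitVal t0 t1 (q i)} then
        ((2.4 : ℝ) : WithTop ℝ)
     else if ∃ i ∈ Set.Icc 1 m, ∃ j ∈ Set.Icc 1 m,
          ({a, b} : Set (𝒜 → T)) = {unitVal t0 t1 (p i), unitVal t0 t1 (q j)} ∧
          ((i : ℤ) - j).natAbs ∈ ({1, m - 1} : Set ℕ) then ((2.5 : ℝ) : WithTop ℝ)
     else ((2.2 : ℝ) : WithTop ℝ))
  else if (hamSet a b).Finite then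
    (if (hamSet a b).ncard = 1 then ((1.4 : ℝ) : WithTop ℝ)
     else (((hamSet a b).ncard : ℝ) : WithTop ℝ))
  else ⊤

open Classical in
/-- The modified Hamming Hamster-Wheel operator `|` on `𝒫(𝒱)`. -/
noncomputable def hamOp {𝒜 T : Type*} (m : ℕ) (p q : ℕ → 𝒜) (t0 t1 : T)
    (A B : Set (𝒜 → T)) : Set (𝒜 → T) :=
  if ∀ a ∈ A, ∀ b ∈ B, ({a, b} : Set (𝒜 → T)) ⊆ hamX m p q t0 t1 ∨
      (¬ (hamSet a b).Finite ∨ 3 ≤ (hamSet a b).ncard) then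
    (if A ∩ hamX m p q t0 t1 = {unitVal t0 t1 (p m), unitVal t0 t1 (p 1)} ∧
        B ∩ hamX m p q t0 t1 = {unitVal t0 t1 (q m), unitVal t0 t1 (q 1)} then
      {unitVal t0 t1 (q m)}
     else if A ∩ hamX m p q t0 t1 = {unitVal t0 t1 (q m), unitVal t0 t1 (q 1)} ∧
        B ∩ hamX m p q t0 t1 = {unitVal t0 t1 (p m), unitVal t0 t1 (p 1)} then
      {unitVal t0 t1 (p m)}
     else inducedOp (· < ·) (hamD m p q t0 t1) A B)
  else inducedOp (· < ·) (hamD m p q t0 t1) A B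

open Classical in
/-- The `r`-modification `d'` of the Hamming Hamster-Wheel pseudo-distance. -/
noncomputable def hamD' {𝒜 T : Type*} (m : ℕ) (p q : ℕ → 𝒜) (t0 t1 : T) (r : ℕ)
    (a b : 𝒜 → T) : WithTop ℝ :=
  if ∃ i ∈ Set.Icc (r + 1) m,
      ({a, b} : Set (𝒜 → T)) = {unitVal t0 t1 (p i), unitVal t0 t1 (q i)} then
    ((2.3 : ℝ) : WithTop ℝ)
  else hamD m p q t0 t1 a b

/-!
Off `X` the modified distance is the Hamming distance (with `1.4` in place of `1`), and on `X`,
where all Hamming distances are `2`, every value lies in `[2.1, 2.5]`. So a real `d'(a, b)` with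
`a ≠ b` is at least `max 1.4 |h(a, b)|` and at most `max 2.5 |h(a, b)|`. If `|h(v, x)| ≥ 3` the
triangle inequality is inherited from that of the Hamming distance; otherwise
`d'(v, x) ≤ 2.5 < 1.4 + 1.4`. The value `∞` occurs exactly when `h` is infinite, and
`h(v, x) ⊆ h(v, w) ∪ h(w, x)`.
-/

section HammingHamsterWheel

variable {𝒜 T : Type*} {t0 t1 : T} {m r : ℕ} {p q : ℕ → 𝒜} {a b c : 𝒜 → T}

lemma hamSet_self (a : 𝒜 → T) : hamSet a a = ∅ := by
  simp [hamSet]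

lemma hamSet_subset_union (a b c : 𝒜 → T) : hamSet a c ⊆ hamSet a b ∪ hamSet b c := by
  intro x hx
  by_cases h : a x = b x
  · exact Or.inr fun h' => hx (h.trans h')
  · exact Or.inl h

lemma hamSet_unitVal_subset (x y : 𝒜) :
    hamSet (unitVal t0 t1 x) (unitVal t0 t1 y) ⊆ {x, y} := by
  intro z hz
  by_contra hxy
  simp only [Set.mem_insert_iff, Set.mem_singleton_iff, not_or] at hxy
  exact hz (by simp [unitVal, hxy.1, hxy.2])

lemma exists_eq_unitVal_of_mem_hamX (ha : a ∈ hamX m p q t0 t1) : ∃ x, a = unitVal t0 t1 x := by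
  obtain ⟨i, -, hi | hi⟩ := ha
  exacts [⟨p i, hi⟩, ⟨q i, hi⟩]

lemma pair_subset_hamX {i : ℕ} (hi : i ∈ Set.Icc (r + 1) m) :
    ({unitVal t0 t1 (p i), unitVal t0 t1 (q i)} : Set (𝒜 → T)) ⊆ hamX m p q t0 t1 := by
  have hi' : i ∈ Set.Icc 1 m := ⟨le_trans (Nat.le_add_left 1 r) hi.1, hi.2⟩
  rintro _ (rfl | rfl)
  exacts [⟨i, hi', Or.inl rfl⟩, ⟨i, hi', Or.inr rfl⟩]

lemma hamSet_finite_and_ncard_le_two_of_subset_hamX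
    (h : ({a, b} : Set (𝒜 → T)) ⊆ hamX m p q t0 t1) :
    (hamSet a b).Finite ∧ (hamSet a b).ncard ≤ 2 := by
  obtain ⟨x, rfl⟩ := exists_eq_unitVal_of_mem_hamX (h (Set.mem_insert a {b}))
  obtain ⟨y, rfl⟩ := exists_eq_unitVal_of_mem_hamX (h (Set.mem_insert_of_mem _ rfl))
  have hsub := hamSet_unitVal_subset (t0 := t0) (t1 := t1) x y
  exact ⟨(Set.toFinite _).subset hsub,
    (Set.ncard_le_ncard hsub (Set.toFinite _)).trans
      ((Set.ncard_insert_le x {y}).trans (by rw [Set.ncard_singleton]))⟩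

lemma hamSet_ncard_pos (hab : a ≠ b) (hfin : (hamSet a b).Finite) : 0 < (hamSet a b).ncard := by
  obtain ⟨x, hx⟩ := Function.ne_iff.mp hab
  exact (Set.ncard_pos hfin).mpr ⟨x, hx⟩

def HamBounds (n : ℕ) (distinct : Prop) (d : ℝ) : Prop :=
  (n : ℝ) ≤ d ∧ d ≤ max 2.5 (n : ℝ) ∧ (distinct → 1.4 ≤ d)

lemma hamBounds_of_mem_Icc {n : ℕ} {distinct : Prop} {d : ℝ} (hn : n ≤ 2)
    (hd : d ∈ Set.Icc 2 2.5) :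
    HamBounds n distinct d := by
  have : (n : ℝ) ≤ 2 := by exact_mod_cast hn
  exact ⟨by linarith [hd.1], le_max_of_le_left hd.2, fun _ => by linarith [hd.1]⟩

lemma exists_hamD_eq_coe (hfin : (hamSet a b).Finite) :
    ∃ d : ℝ, hamD m p q t0 t1 a b = d ∧ HamBounds (hamSet a b).ncard (a ≠ b) d := by
  unfold hamD
  split_ifs with hab hX _ _ _ h1
  · subst hab
    exact ⟨0, rfl, by simp [hamSet_self, HamBounds]⟩
  all_goals try
    exact ⟨_, rfl, hamBounds_of_mem_Icc (hamSet_finite_and_ncard_le_two_of_subset_hamX hX).2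
      (by norm_num)⟩
  · exact ⟨1.4, rfl, by simp only [HamBounds, h1]; norm_num⟩
  · have h2 : (2 : ℝ) ≤ (hamSet a b).ncard := by
      have := hamSet_ncard_pos hab hfin
      exact_mod_cast (show 2 ≤ (hamSet a b).ncard by omega)
    exact ⟨_, rfl, le_rfl, le_max_right _ _, fun _ => by linarith⟩

lemma exists_hamD'_eq_coe (hfin : (hamSet a b).Finite) :
    ∃ d : ℝ, hamD' m p q t0 t1 r a b = d ∧ HamBounds (hamSet a b).ncard (a ≠ b) d := by
  unfold hamD'
  split_ifs with h23
  · obtain ⟨i, hi, hpair⟩ := h23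
    exact ⟨2.3, rfl, hamBounds_of_mem_Icc
      (hamSet_finite_and_ncard_le_two_of_subset_hamX (hpair ▸ pair_subset_hamX hi)).2
      (by norm_num)⟩
  · exact exists_hamD_eq_coe hfin

lemma hamD'_eq_top_iff : hamD' m p q t0 t1 r a b = ⊤ ↔ (hamSet a b).Infinite := by
  refine ⟨fun htop hfin => ?_, fun hinf => ?_⟩
  · obtain ⟨d, hd, -⟩ := exists_hamD'_eq_coe (m := m) (p := p) (q := q) (r := r) hfin
    exact WithTop.coe_ne_top (hd.symm.trans htop)
  · have hab : a ≠ b := by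
      rintro rfl
      simp [hamSet_self] at hinf
    have hX : ¬ ({a, b} : Set (𝒜 → T)) ⊆ hamX m p q t0 t1 := fun hX =>
      hinf (hamSet_finite_and_ncard_le_two_of_subset_hamX hX).1
    unfold hamD'
    rw [if_neg, hamD, if_neg hab, if_neg hX, if_neg hinf]
    rintro ⟨i, hi, hpair⟩
    exact hX (hpair ▸ pair_subset_hamX hi)

lemma hamD'_ne_top_iff : hamD' m p q t0 t1 r a b ≠ ⊤ ↔ (hamSet a b).Finite :=
  hamD'_eq_top_iff.not.trans Set.not_infinite

lemma hamD'_nonneg : 0 ≤ hamD' m p q t0 t1 r a b := by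
  by_cases hfin : (hamSet a b).Finite
  · obtain ⟨d, hd, hbounds⟩ := exists_hamD'_eq_coe (m := m) (p := p) (q := q) (r := r) hfin
    rw [hd]
    exact WithTop.coe_nonneg.mpr ((Nat.cast_nonneg _).trans hbounds.1)
  · rw [hamD'_eq_top_iff.mpr hfin]
    exact le_top

lemma hamSet_ncard_le_add (hab : (hamSet a b).Finite) (hbc : (hamSet b c).Finite) :
    (hamSet a c).ncard ≤ (hamSet a b).ncard + (hamSet b c).ncard :=
  (Set.ncard_le_ncard (hamSet_subset_union a b c) (hab.union hbc)).trans (Set.ncard_union_le _ _)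

lemma HamBounds.le_add {n₁ n₂ n₃ : ℕ} {ne₁ ne₂ ne₃ : Prop} {d₁ d₂ d₃ : ℝ}
    (h₁ : HamBounds n₁ ne₁ d₁) (hn : n₁ ≤ n₂ + n₃) (h₂ : HamBounds n₂ ne₂ d₂)
    (h₃ : HamBounds n₃ ne₃ d₃) (hne₂ : ne₂) (hne₃ : ne₃) : d₁ ≤ d₂ + d₃ := by
  have : (n₁ : ℝ) ≤ n₂ + n₃ := by exact_mod_cast hn
  rcases max_cases (2.5 : ℝ) n₁ with ⟨hmax, -⟩ | ⟨hmax, -⟩ <;>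
    linarith [h₁.2.1, h₂.1, h₃.1, h₂.2.2 hne₂, h₃.2.2 hne₃]

lemma hamD'_le_add (hab : (hamSet a b).Finite) (hbc : (hamSet b c).Finite) :
    hamD' m p q t0 t1 r a c ≤ hamD' m p q t0 t1 r a b + hamD' m p q t0 t1 r b c := by
  rcases eq_or_ne a b with rfl | hne₂
  · exact le_add_of_nonneg_left hamD'_nonneg
  rcases eq_or_ne b c with rfl | hne₃
  · exact le_add_of_nonneg_right hamD'_nonneg
  have hac := (hab.union hbc).subset (hamSet_subset_union a b c)
  obtain ⟨d₁, h₁, hd₁⟩ := exists_hamD'_eq_coe (m := m) (p := p) (q := q) (r := r) hac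
  obtain ⟨d₂, h₂, hd₂⟩ := exists_hamD'_eq_coe (m := m) (p := p) (q := q) (r := r) hab
  obtain ⟨d₃, h₃, hd₃⟩ := exists_hamD'_eq_coe (m := m) (p := p) (q := q) (r := r) hbc
  rw [h₁, h₂, h₃, ← WithTop.coe_add, WithTop.coe_le_coe]
  exact hd₁.le_add (hamSet_ncard_le_add hab hbc) hd₂ hd₃ hne₂ hne₃

end HammingHamsterWheel

theorem stmt12_general {𝒜 T : Type*}
    (t0 t1 : T)
    (m : ℕ) (p q : ℕ → 𝒜)
    (r : ℕ) :
    ∀ v w x : 𝒜 → T,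
      (hamD' m p q t0 t1 r v x ≠ ⊤ → hamD' m p q t0 t1 r v w ≠ ⊤ →
        hamD' m p q t0 t1 r w x ≠ ⊤ →
        hamD' m p q t0 t1 r v x ≤ hamD' m p q t0 t1 r v w + hamD' m p q t0 t1 r w x) ∧
      (hamD' m p q t0 t1 r v x = ⊤ →
        hamD' m p q t0 t1 r v w = ⊤ ∨ hamD' m p q t0 t1 r w x = ⊤) := by
  intro v w x
  refine ⟨fun _ hvw hwx => hamD'_le_add (hamD'_ne_top_iff.mp hvw) (hamD'_ne_top_iff.mp hwx),
    fun hvx => ?_⟩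
  simp only [hamD'_eq_top_iff] at hvx ⊢
  exact Set.infinite_union.mp (hvx.mono (hamSet_subset_union v w x))

/-- The `r`-modification of the Hamming Hamster-Wheel pseudo-distance is liberally
triangle-inequality respecting. -/
theorem stmt12 {𝒜 T : Type*} [Countable 𝒜] [Infinite 𝒜]
    (t0 t1 : T) (ht : t0 ≠ t1)
    (m : ℕ) (hm : 4 ≤ m) (p q : ℕ → 𝒜) (hdist : hamDistinctAtoms m p q)
    (r : ℕ) (hr : r ∈ Set.Icc 1 (m - 1)) :
    ∀ v w x : 𝒜 → T,
      (hamD' m p q t0 t1 r v x ≠ ⊤ → hamD' m p q t0 t1 r v w ≠ ⊤ →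
        hamD' m p q t0 t1 r w x ≠ ⊤ →
        hamD' m p q t0 t1 r v x ≤ hamD' m p q t0 t1 r v w + hamD' m p q t0 t1 r w x) ∧
      (hamD' m p q t0 t1 r v x = ⊤ →
        hamD' m p q t0 t1 r v w = ⊤ ∨ hamD' m p q t0 t1 r w x = ⊤) :=
  stmt12_general t0 t1 m p q r
end

section
/- The modified Hamming Hamster-Wheel operator | is not a distance operator: there is no pseudo-distance S = ⟨C, ≺, g⟩ on 𝒱 such that V | W = V |_S W for all V, W ⊆ 𝒱. -/
/-!
For neighbouring indices `i, j` of the wheel `1, …, m` we have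
`d(vᵢ, wᵢ) = 2.4 < 2.5 = d(vᵢ, wⱼ)`, so `{vᵢ} | {wᵢ, wⱼ} = {wᵢ}`, and a pseudo-distance `g` inducing `|`
must also rank `g(vᵢ, wᵢ)` strictly below `g(vᵢ, wⱼ)`. Given that, `{vᵢ, vⱼ} | {wᵢ, wⱼ} = {wᵢ, wⱼ}`
forces `g(vᵢ, wᵢ) = g(vⱼ, wⱼ)`. Walking once around the wheel gives `g(v₁, w₁) = g(vₘ, wₘ)`, whence `g`
would put both `wₘ` and `w₁` into `{vₘ, v₁} | {wₘ, w₁}`, while the modified operator returns `{wₘ}`.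
-/

theorem StrictTotalOrder'.isStrictTotalOrder {C : Type*} {lt : C → C → Prop}
    (h : StrictTotalOrder' lt) : IsStrictTotalOrder C lt where
  irrefl := h.1
  trans := h.2.1
  trichotomous a b hab hba := by_contra fun hne => (h.2.2 a b hne).elim hab hba

section LinearOrder

variable {𝒱 C : Type*} [LinearOrder C] {d : 𝒱 → 𝒱 → C}

theorem mem_inducedOp_iff {A B : Set 𝒱} {w : 𝒱} :
    w ∈ inducedOp (· < ·) d A B ↔ w ∈ B ∧ ∃ v ∈ A, ∀ v' ∈ A, ∀ w' ∈ B, d v w ≤ d v' w' := by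
  simp only [inducedOp, Set.mem_ofPred_eq, ← le_iff_lt_or_eq]

theorem inducedOp_subset (A B : Set 𝒱) : inducedOp (· < ·) d A B ⊆ B := fun _ hw => hw.1

theorem inducedOp_singleton_pair_eq_singleton_iff {a b c : 𝒱} (hbc : b ≠ c) :
    inducedOp (· < ·) d {a} {b, c} = {b} ↔ d a b < d a c := by
  have hmem : ∀ x, x ∈ inducedOp (· < ·) d {a} {b, c} ↔
      (x = b ∨ x = c) ∧ d a x ≤ d a b ∧ d a x ≤ d a c := by
    simp [mem_inducedOp_iff]
  constructor
  · intro h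
    have hc : c ∉ inducedOp (· < ·) d {a} {b, c} := by rw [h]; exact hbc.symm
    simpa [hmem] using hc
  · intro hlt
    ext x
    rw [hmem, Set.mem_singleton_iff]
    constructor
    · rintro ⟨hx | hx, hxb, -⟩
      · exact hx
      · subst hx
        exact absurd hxb (not_le.mpr hlt)
    · rintro rfl
      exact ⟨Or.inl rfl, le_rfl, hlt.le⟩

theorem mem_inducedOp_pair_pair_iff {a₁ a₂ b₁ b₂ : 𝒱}
    (h₁ : d a₁ b₁ < d a₁ b₂) (h₂ : d a₂ b₂ < d a₂ b₁) :
    b₂ ∈ inducedOp (· < ·) d {a₁, a₂} {b₁, b₂} ↔ d a₂ b₂ ≤ d a₁ b₁ := by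
  simp only [mem_inducedOp_iff, Set.mem_insert_iff, Set.mem_singleton_iff, or_true, true_and,
    exists_eq_or_imp, exists_eq_left, forall_eq_or_imp, forall_eq]
  constructor
  · rintro (⟨⟨h, -⟩, -⟩ | ⟨⟨h, -⟩, -⟩)
    · exact absurd h (not_le.mpr h₁)
    · exact h
  · intro h
    exact Or.inr ⟨⟨h, h.trans h₁.le⟩, h₂.le, le_rfl⟩

theorem inducedOp_pair_pair_eq_pair_iff {a₁ a₂ b₁ b₂ : 𝒱}
    (h₁ : d a₁ b₁ < d a₁ b₂) (h₂ : d a₂ b₂ < d a₂ b₁) :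
    inducedOp (· < ·) d {a₁, a₂} {b₁, b₂} = {b₁, b₂} ↔ d a₁ b₁ = d a₂ b₂ := by
  have hmem₁ : b₁ ∈ inducedOp (· < ·) d {a₁, a₂} {b₁, b₂} ↔ d a₁ b₁ ≤ d a₂ b₂ := by
    rw [Set.pair_comm a₁, Set.pair_comm b₁]
    exact mem_inducedOp_pair_pair_iff h₂ h₁
  rw [(inducedOp_subset _ _).ge_iff_eq.symm, Set.insert_subset_iff, Set.singleton_subset_iff,
    hmem₁, mem_inducedOp_pair_pair_iff h₁ h₂, le_antisymm_iff]

end LinearOrder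

section Hamming

variable {𝒜 T : Type*} {t0 t1 : T} {m : ℕ} {p q : ℕ → 𝒜}

theorem unitVal_injective (ht : t0 ≠ t1) : Function.Injective (unitVal t0 t1 : 𝒜 → 𝒜 → T) := by
  intro a b h
  by_contra hab
  have hval := congrFun h a
  simp only [unitVal, if_neg hab] at hval
  exact ht hval.symm

theorem mem_hamX_p {i : ℕ} (hi : i ∈ Set.Icc 1 m) : unitVal t0 t1 (p i) ∈ hamX m p q t0 t1 :=
  ⟨i, hi, Or.inl rfl⟩

theorem mem_hamX_q {i : ℕ} (hi : i ∈ Set.Icc 1 m) : unitVal t0 t1 (q i) ∈ hamX m p q t0 t1 :=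
  ⟨i, hi, Or.inr rfl⟩

theorem hamOp_eq_inducedOp_of_subset_hamX {A B : Set (𝒜 → T)}
    (hA : A ⊆ hamX m p q t0 t1) (hB : B ⊆ hamX m p q t0 t1)
    (hA₁ : A ≠ {unitVal t0 t1 (p m), unitVal t0 t1 (p 1)})
    (hA₂ : A ≠ {unitVal t0 t1 (q m), unitVal t0 t1 (q 1)}) :
    hamOp m p q t0 t1 A B = inducedOp (· < ·) (hamD m p q t0 t1) A B := by
  unfold hamOp
  rw [if_pos fun a ha b hb => Or.inl (Set.pair_subset (hA ha) (hB hb)),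
    Set.inter_eq_left.mpr hA, if_neg (fun h => hA₁ h.1), if_neg (fun h => hA₂ h.1)]

theorem hamOp_wheel_ends (hm : 1 ≤ m) :
    hamOp m p q t0 t1 {unitVal t0 t1 (p m), unitVal t0 t1 (p 1)}
      {unitVal t0 t1 (q m), unitVal t0 t1 (q 1)} = {unitVal t0 t1 (q m)} := by
  have hmIcc : m ∈ Set.Icc 1 m := ⟨hm, le_rfl⟩
  have h1Icc : 1 ∈ Set.Icc 1 m := ⟨le_rfl, hm⟩
  have hA : {unitVal t0 t1 (p m), unitVal t0 t1 (p 1)} ⊆ hamX m p q t0 t1 :=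
    Set.pair_subset (mem_hamX_p hmIcc) (mem_hamX_p h1Icc)
  have hB : {unitVal t0 t1 (q m), unitVal t0 t1 (q 1)} ⊆ hamX m p q t0 t1 :=
    Set.pair_subset (mem_hamX_q hmIcc) (mem_hamX_q h1Icc)
  unfold hamOp
  rw [if_pos fun a ha b hb => Or.inl (Set.pair_subset (hA ha) (hB hb)),
    if_pos ⟨Set.inter_eq_left.mpr hA, Set.inter_eq_left.mpr hB⟩]

variable (ht : t0 ≠ t1) (hdist : hamDistinctAtoms m p q)
include ht hdist

theorem unitVal_p_ne_unitVal_q ⦃i j : ℕ⦄ (hi : i ∈ Set.Icc 1 m) (hj : j ∈ Set.Icc 1 m) :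
    unitVal t0 t1 (p i) ≠ unitVal t0 t1 (q j) :=
  (unitVal_injective ht).ne (hdist.1 i hi j hj)

theorem unitVal_p_inj {i j : ℕ} (hi : i ∈ Set.Icc 1 m) (hj : j ∈ Set.Icc 1 m) :
    unitVal t0 t1 (p i) = unitVal t0 t1 (p j) ↔ i = j :=
  ⟨fun h => hdist.2.1 i hi j hj (unitVal_injective ht h), fun h => h ▸ rfl⟩

theorem unitVal_q_inj {i j : ℕ} (hi : i ∈ Set.Icc 1 m) (hj : j ∈ Set.Icc 1 m) :
    unitVal t0 t1 (q i) = unitVal t0 t1 (q j) ↔ i = j :=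
  ⟨fun h => hdist.2.2 i hi j hj (unitVal_injective ht h), fun h => h ▸ rfl⟩

theorem hamD_p_q_self {i : ℕ} (hi : i ∈ Set.Icc 1 m) :
    hamD m p q t0 t1 (unitVal t0 t1 (p i)) (unitVal t0 t1 (q i)) = ((2.4 : ℝ) : WithTop ℝ) := by
  have hne := unitVal_p_ne_unitVal_q ht hdist
  unfold hamD
  rw [if_neg (hne hi hi), if_pos (Set.pair_subset (mem_hamX_p hi) (mem_hamX_q hi)), if_neg,
    if_pos ⟨i, hi, rfl⟩]
  rintro (⟨k, hk, l, hl, -, h⟩ | ⟨k, hk, l, hl, h, -⟩)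
  · exact hne hl hi h.symm
  · exact hne hi hk h

theorem hamD_p_q_of_adj (hm : 2 ≤ m) {i j : ℕ} (hi : i ∈ Set.Icc 1 m) (hj : j ∈ Set.Icc 1 m)
    (hadj : ((i : ℤ) - j).natAbs ∈ ({1, m - 1} : Set ℕ)) :
    hamD m p q t0 t1 (unitVal t0 t1 (p i)) (unitVal t0 t1 (q j)) = ((2.5 : ℝ) : WithTop ℝ) := by
  have hne := unitVal_p_ne_unitVal_q ht hdist
  have hij : i ≠ j := by
    simp only [Set.mem_insert_iff, Set.mem_singleton_iff] at hadj
    omega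
  unfold hamD
  rw [if_neg (hne hi hj), if_pos (Set.pair_subset (mem_hamX_p hi) (mem_hamX_q hj)), if_neg,
    if_neg, if_pos ⟨i, hi, j, hj, rfl, hadj⟩]
  · rintro ⟨k, hk, hpair⟩
    rcases Set.pair_eq_pair_iff.mp hpair with ⟨hpk, hqk⟩ | ⟨hqk, -⟩
    · exact hij (((unitVal_p_inj ht hdist hi hk).mp hpk).trans
        ((unitVal_q_inj ht hdist hj hk).mp hqk).symm)
    · exact hne hi hk hqk
  · rintro (⟨k, hk, l, hl, -, h⟩ | ⟨k, hk, l, hl, h, -⟩)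
    · exact hne hl hj h.symm
    · exact hne hi hk h

theorem hamD_p_q_self_lt_of_adj (hm : 2 ≤ m) {i j : ℕ} (hi : i ∈ Set.Icc 1 m)
    (hj : j ∈ Set.Icc 1 m) (hadj : ((i : ℤ) - j).natAbs ∈ ({1, m - 1} : Set ℕ)) :
    hamD m p q t0 t1 (unitVal t0 t1 (p i)) (unitVal t0 t1 (q i)) <
      hamD m p q t0 t1 (unitVal t0 t1 (p i)) (unitVal t0 t1 (q j)) := by
  rw [hamD_p_q_self ht hdist hi, hamD_p_q_of_adj ht hdist hm hi hj hadj]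
  exact WithTop.coe_lt_coe.mpr (by norm_num)

theorem hamOp_singleton_pair (hm : 2 ≤ m) {i j : ℕ} (hi : i ∈ Set.Icc 1 m)
    (hj : j ∈ Set.Icc 1 m) (hadj : ((i : ℤ) - j).natAbs ∈ ({1, m - 1} : Set ℕ)) :
    hamOp m p q t0 t1 {unitVal t0 t1 (p i)} {unitVal t0 t1 (q i), unitVal t0 t1 (q j)} =
      {unitVal t0 t1 (q i)} := by
  have hmIcc : m ∈ Set.Icc 1 m := ⟨by omega, le_rfl⟩
  have h1Icc : 1 ∈ Set.Icc 1 m := ⟨le_rfl, by omega⟩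
  have hij : i ≠ j := by
    simp only [Set.mem_insert_iff, Set.mem_singleton_iff] at hadj
    omega
  rw [hamOp_eq_inducedOp_of_subset_hamX (Set.singleton_subset_iff.mpr (mem_hamX_p hi))
    (Set.pair_subset (mem_hamX_q hi) (mem_hamX_q hj)), inducedOp_singleton_pair_eq_singleton_iff]
  · exact hamD_p_q_self_lt_of_adj ht hdist hm hi hj hadj
  · exact fun h => hij ((unitVal_q_inj ht hdist hi hj).mp h)
  · intro h
    have hall := (Set.eq_singleton_iff_unique_mem.mp h.symm).2
    have hmi := (unitVal_p_inj ht hdist hmIcc hi).mp (hall _ (Set.mem_insert _ _))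
    have h1i := (unitVal_p_inj ht hdist h1Icc hi).mp (hall _ (Set.mem_insert_of_mem _ rfl))
    omega
  · intro h
    exact unitVal_p_ne_unitVal_q ht hdist hi hmIcc
      ((Set.eq_singleton_iff_unique_mem.mp h.symm).2 _ (Set.mem_insert _ _)).symm

theorem hamOp_pair_pair_succ (hm : 3 ≤ m) {i : ℕ} (hi : 1 ≤ i) (him : i + 1 ≤ m) :
    hamOp m p q t0 t1 {unitVal t0 t1 (p i), unitVal t0 t1 (p (i + 1))}
        {unitVal t0 t1 (q i), unitVal t0 t1 (q (i + 1))} =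
      {unitVal t0 t1 (q i), unitVal t0 t1 (q (i + 1))} := by
  have hi₀ : i ∈ Set.Icc 1 m := ⟨hi, by omega⟩
  have hi₁ : i + 1 ∈ Set.Icc 1 m := ⟨by omega, him⟩
  have hmIcc : m ∈ Set.Icc 1 m := ⟨by omega, le_rfl⟩
  have h1Icc : 1 ∈ Set.Icc 1 m := ⟨le_rfl, by omega⟩
  have hadj : ((i : ℤ) - (i + 1 : ℕ)).natAbs ∈ ({1, m - 1} : Set ℕ) := by simp
  have hadj' : (((i + 1 : ℕ) : ℤ) - i).natAbs ∈ ({1, m - 1} : Set ℕ) := by simp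
  rw [hamOp_eq_inducedOp_of_subset_hamX (Set.pair_subset (mem_hamX_p hi₀) (mem_hamX_p hi₁))
    (Set.pair_subset (mem_hamX_q hi₀) (mem_hamX_q hi₁)),
    inducedOp_pair_pair_eq_pair_iff (hamD_p_q_self_lt_of_adj ht hdist (by omega) hi₀ hi₁ hadj)
      (hamD_p_q_self_lt_of_adj ht hdist (by omega) hi₁ hi₀ hadj'),
    hamD_p_q_self ht hdist hi₀, hamD_p_q_self ht hdist hi₁]
  · intro h
    rcases Set.pair_eq_pair_iff.mp h with ⟨him', -⟩ | ⟨hi1, him'⟩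
    · have := (unitVal_p_inj ht hdist hi₀ hmIcc).mp him'
      omega
    · have := (unitVal_p_inj ht hdist hi₀ h1Icc).mp hi1
      have := (unitVal_p_inj ht hdist hi₁ hmIcc).mp him'
      omega
  · intro h
    rcases Set.pair_eq_pair_iff.mp h with ⟨hq, -⟩ | ⟨hq, -⟩
    · exact unitVal_p_ne_unitVal_q ht hdist hi₀ hmIcc hq
    · exact unitVal_p_ne_unitVal_q ht hdist hi₀ h1Icc hq

end Hamming

section InducingDistance

variable {𝒜 T C : Type*} [LinearOrder C] {t0 t1 : T} {m : ℕ} {p q : ℕ → 𝒜}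
  {g : (𝒜 → T) → (𝒜 → T) → C} (ht : t0 ≠ t1) (hdist : hamDistinctAtoms m p q)
  (hg : ∀ A B, hamOp m p q t0 t1 A B = inducedOp (· < ·) g A B)
include ht hdist hg

theorem diag_lt_of_hamOp_eq (hm : 2 ≤ m) {i j : ℕ} (hi : i ∈ Set.Icc 1 m)
    (hj : j ∈ Set.Icc 1 m) (hadj : ((i : ℤ) - j).natAbs ∈ ({1, m - 1} : Set ℕ)) :
    g (unitVal t0 t1 (p i)) (unitVal t0 t1 (q i)) <
      g (unitVal t0 t1 (p i)) (unitVal t0 t1 (q j)) := by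
  have hij : i ≠ j := by
    simp only [Set.mem_insert_iff, Set.mem_singleton_iff] at hadj
    omega
  refine (inducedOp_singleton_pair_eq_singleton_iff ?_).mp
    ((hg _ _).symm.trans (hamOp_singleton_pair ht hdist hm hi hj hadj))
  exact fun h => hij ((unitVal_q_inj ht hdist hi hj).mp h)

theorem diag_eq_succ_of_hamOp_eq (hm : 3 ≤ m) {i : ℕ} (hi : 1 ≤ i) (him : i + 1 ≤ m) :
    g (unitVal t0 t1 (p i)) (unitVal t0 t1 (q i)) =
      g (unitVal t0 t1 (p (i + 1))) (unitVal t0 t1 (q (i + 1))) :=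
  (inducedOp_pair_pair_eq_pair_iff
    (diag_lt_of_hamOp_eq ht hdist hg (by omega) ⟨hi, by omega⟩ ⟨by omega, him⟩ (by simp))
    (diag_lt_of_hamOp_eq ht hdist hg (by omega) ⟨by omega, him⟩ ⟨hi, by omega⟩ (by simp))).mp
    ((hg _ _).symm.trans (hamOp_pair_pair_succ ht hdist hm hi him))

theorem diag_eq_diag_one_of_hamOp_eq (hm : 3 ≤ m) {n : ℕ} (hn : 1 ≤ n) (hnm : n ≤ m) :
    g (unitVal t0 t1 (p 1)) (unitVal t0 t1 (q 1)) =
      g (unitVal t0 t1 (p n)) (unitVal t0 t1 (q n)) := by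
  induction n, hn using Nat.le_induction with
  | base => rfl
  | succ n hn ih => exact (ih (by omega)).trans (diag_eq_succ_of_hamOp_eq ht hdist hg hm hn hnm)

end InducingDistance

theorem stmt13_general {𝒜 T : Type*}
    (t0 t1 : T) (ht : t0 ≠ t1)
    (m : ℕ) (hm : 4 ≤ m) (p q : ℕ → 𝒜) (hdist : hamDistinctAtoms m p q) :
    ¬ ∃ (C : Type*) (lt : C → C → Prop) (g : (𝒜 → T) → (𝒜 → T) → C),
      Nonempty C ∧ StrictTotalOrder' lt ∧
      ∀ A B : Set (𝒜 → T), hamOp m p q t0 t1 A B = inducedOp lt g A B := by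
  rintro ⟨C, lt, g, -, hlt, hg⟩
  have := hlt.isStrictTotalOrder
  classical
  let := linearOrderOfSTO lt
  replace hg : ∀ A B, hamOp m p q t0 t1 A B = inducedOp (· < ·) g A B := hg
  have hmIcc : m ∈ Set.Icc 1 m := ⟨by omega, le_rfl⟩
  have h1Icc : 1 ∈ Set.Icc 1 m := ⟨le_rfl, by omega⟩
  have hends := (inducedOp_pair_pair_eq_pair_iff
    (diag_lt_of_hamOp_eq ht hdist hg (by omega) hmIcc h1Icc (by simp; omega))
    (diag_lt_of_hamOp_eq ht hdist hg (by omega) h1Icc hmIcc (by simp; omega))).mpr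
    (diag_eq_diag_one_of_hamOp_eq ht hdist hg (by omega) (by omega) le_rfl).symm
  rw [← hg, hamOp_wheel_ends (by omega)] at hends
  have h1m := (unitVal_q_inj ht hdist h1Icc hmIcc).mp
    ((Set.eq_singleton_iff_unique_mem.mp hends.symm).2 _ (Set.mem_insert_of_mem _ rfl))
  omega

/-- The modified Hamming Hamster-Wheel operator is not a distance operator: no
pseudo-distance `⟨C, lt, g⟩` on `𝒱` induces it. -/
theorem stmt13 {𝒜 T : Type*} [Countable 𝒜] [Infinite 𝒜]
    (t0 t1 : T) (ht : t0 ≠ t1)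
    (m : ℕ) (hm : 4 ≤ m) (p q : ℕ → 𝒜) (hdist : hamDistinctAtoms m p q) :
    ¬ ∃ (C : Type*) (lt : C → C → Prop) (g : (𝒜 → T) → (𝒜 → T) → C),
      Nonempty C ∧ StrictTotalOrder' lt ∧
      ∀ A B : Set (𝒜 → T), hamOp m p q t0 t1 A B = inducedOp lt g A B :=
  stmt13_general t0 t1 ht m hm p q hdist
end
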